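/- arXiv:1903.02385 — 2 statements merged into one kernel-verified Lean document; each statement's English description precedes it below -/
import Mathlib

section
/- Let v : ℝ → ℝ be a C⁴ positive solution of the ODE v''''(t) − A·v''(t) + B·v(t) = g(v(t)) with v(t) → 0 as |t| → ∞. Then for every ε > 0 there exists a constant C_ε < ∞ such that v(t) ≤ C_ε·e^{−(√μ − ε)·|t|} for all t ∈ ℝ, where μ = (A − √(A² − 4(B − β)))/2 and β = lim_{t→0⁺} g'(t). -/
/-!
For `b > β` the hypotheses on `g` give `g s ≤ b s` for small `s > 0`, so on both tails
`(D² - ℓ₁)(D² - ℓ₂) v = g(v) - b v ≤ 0`, where `ℓ₁ > ℓ₂ > 0` are the roots of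
`ℓ² - A ℓ + (B - b)`; as `b ↓ β`, `ℓ₂ ↑ μ`.

The function `u = v'' - ℓ₁ v` satisfies `u'' ≤ ℓ₂ u + const`, so once `u` is very negative it
stays so in the direction in which it decreases; this would force `v'' ≤ -1` on a ray, which is
impossible for positive `v`. Hence `u` is bounded below, so `φ = ℓ₂ v - v''` is bounded above with
`φ'' ≥ ℓ₁ φ` on the tail, and the maximum principle against the barriers
`a e^{-√ℓ₁ t} + η e^{√ℓ₁ t}` (`η → 0`) gives `φ ≲ e^{-√ℓ₁ t}`. Consequently `v + c e^{-√ℓ₁ t}` is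
a bounded subsolution of `w'' = ℓ₂ w`, and the same comparison gives `v ≲ e^{-√ℓ₂ t}`.
The left tail is the right tail of `t ↦ v (-t)`.
-/

open Real Filter Set

noncomputable section

/-- Conditions (G) on the nonlinearity `g`, extended to `[0,∞)` by `g 0 = 0`. -/
def CondG (n : ℕ) (g : ℝ → ℝ) : Prop :=
  ContDiffOn ℝ 1 g (Set.Ioi 0) ∧
  (∀ t > 0, 0 < g t) ∧
  Filter.Tendsto g (nhdsWithin 0 (Set.Ioi 0)) (nhds 0) ∧
  (∀ t > 0, g t / t < deriv g t ∧ deriv g t ≤ (((n : ℝ) + 4) / ((n : ℝ) - 4)) * (g t / t)) ∧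
  (∃ β : ℝ, 0 ≤ β ∧ β < (n : ℝ) ^ 2 * ((n : ℝ) - 4) ^ 2 / 16 ∧
    Filter.Tendsto (deriv g) (nhdsWithin 0 (Set.Ioi 0)) (nhds β)) ∧
  (∃ q c : ℝ, 1 < q ∧ 0 < c ∧ ∀ t ≥ 1, c * t ^ q ≤ g t) ∧
  g 0 = 0

/-- `v` solves the ODE `v'''' - A v'' + B v = g(v)` on all of `ℝ`. -/
def IsSol (A B : ℝ) (g v : ℝ → ℝ) : Prop :=
  ∀ t : ℝ, iteratedDeriv 4 v t - A * iteratedDeriv 2 v t + B * v t = g (v t)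

open Topology

lemma ContDiff.hasDerivAt_iteratedDeriv {n k : ℕ} {f : ℝ → ℝ} (hf : ContDiff ℝ n f) (hk : k < n)
    (t : ℝ) : HasDerivAt (iteratedDeriv k f) (iteratedDeriv (k + 1) f t) t := by
  rw [iteratedDeriv_succ]
  exact (hf.differentiable_iteratedDeriv k (by exact_mod_cast hk) t).hasDerivAt

lemma ContDiff.hasDerivAt_iteratedDeriv_one {f : ℝ → ℝ} {n : ℕ} (hf : ContDiff ℝ n f) (hn : 0 < n)
    (t : ℝ) : HasDerivAt f (iteratedDeriv 1 f t) t := by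
  simpa using hf.hasDerivAt_iteratedDeriv hn t

lemma hasDerivAt_exp_mul_sub (c T t : ℝ) :
    HasDerivAt (fun s => exp (c * (s - T))) (c * exp (c * (t - T))) t := by
  simpa [mul_comm] using (((hasDerivAt_id t).sub_const T).const_mul c).exp

lemma antitoneOn_of_forall_hasDerivAt_nonpos {f f' : ℝ → ℝ} {D : Set ℝ} (hD : Convex ℝ D)
    (hf : ∀ t, HasDerivAt f (f' t) t) (hf' : ∀ t ∈ interior D, f' t ≤ 0) : AntitoneOn f D :=
  antitoneOn_of_hasDerivWithinAt_nonpos hD (fun t _ => (hf t).continuousAt.continuousWithinAt)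
    (fun t _ => (hf t).hasDerivWithinAt) hf'

lemma le_add_mul_sub_of_hasDerivAt_le {f f' : ℝ → ℝ} {a C : ℝ}
    (hf : ∀ t, HasDerivAt f (f' t) t) (hle : ∀ t ≥ a, f' t ≤ C) :
    ∀ t ≥ a, f t ≤ f a + C * (t - a) := by
  intro t ht
  have := (convex_Ici a).image_sub_le_mul_sub_of_deriv_le
    (fun x _ => (hf x).continuousAt.continuousWithinAt)
    (fun x _ => (hf x).differentiableAt.differentiableWithinAt)
    (fun x hx => (hf x).deriv ▸ hle x (interior_subset hx)) a self_mem_Ici t ht ht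
  linarith

lemma exists_neg_of_deriv2_le_neg_one {f f' f'' : ℝ → ℝ} {a : ℝ}
    (hf : ∀ t, HasDerivAt f (f' t) t) (hf' : ∀ t, HasDerivAt f' (f'' t) t)
    (hle : ∀ t ≥ a, f'' t ≤ -1) : ∃ t, f t < 0 := by
  set b := a + |f' a| + 1
  have hslope : ∀ t ≥ b, f' t ≤ -1 := fun t ht => by
    have := le_add_mul_sub_of_hasDerivAt_le hf' hle t (by linarith [abs_nonneg (f' a)])
    linarith [le_abs_self (f' a)]
  refine ⟨b + |f b| + 1, ?_⟩
  have := le_add_mul_sub_of_hasDerivAt_le hf hslope (b + |f b| + 1)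
    (by linarith [abs_nonneg (f b)])
  linarith [le_abs_self (f b)]

lemma nonpos_on_Ici_of_deriv2_neg {y y' y'' : ℝ → ℝ} {t₀ : ℝ}
    (hy : ∀ t, HasDerivAt y (y' t) t) (hy' : ∀ t, HasDerivAt y' (y'' t) t)
    (hcont : Continuous y'') (hneg : ∀ t, y t ≤ 0 → y'' t < 0)
    (h₀ : y t₀ ≤ 0) (h₀' : y' t₀ ≤ 0) : ∀ t ≥ t₀, y t ≤ 0 := by
  intro t ht
  have hcy : Continuous y := continuous_iff_continuousAt.2 fun t => (hy t).continuousAt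
  have hcy' : Continuous y' := continuous_iff_continuousAt.2 fun t => (hy' t).continuousAt
  set s := {t | y t ≤ 0 ∧ y' t ≤ 0}
  have hs : IsClosed s :=
    (isClosed_le hcy continuous_const).inter (isClosed_le hcy' continuous_const)
  refine ((hs.inter isClosed_Icc).Icc_subset_of_forall_mem_nhdsWithin ⟨h₀, h₀'⟩ ?_
    ⟨ht, le_rfl⟩).1
  rintro x ⟨⟨hx, hx'⟩, -⟩
  obtain ⟨u, hxu, hu⟩ := mem_nhdsGE_iff_exists_Icc_subset.1
    (nhdsWithin_le_nhds ((hcont.tendsto x).eventually (gt_mem_nhds (hneg x hx))))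
  have hy'le : ∀ z ∈ Icc x u, y' z ≤ 0 := fun z hz =>
    (antitoneOn_of_forall_hasDerivAt_nonpos (convex_Icc x u) hy'
      (fun z hz => (hu (interior_subset hz)).le) (left_mem_Icc.2 hxu.le) hz hz.1).trans hx'
  have hanti : AntitoneOn y (Icc x u) := antitoneOn_of_forall_hasDerivAt_nonpos
    (convex_Icc x u) hy fun z hz => hy'le z (interior_subset hz)
  filter_upwards [Ico_mem_nhdsGT hxu] with z hz
  exact ⟨(hanti (left_mem_Icc.2 hxu.le) (Ico_subset_Icc_self hz) hz.1).trans hx,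
    hy'le z (Ico_subset_Icc_self hz)⟩

lemma not_isLocalMax_of_hasDerivAt_deriv_pos {w w' : ℝ → ℝ} {x c : ℝ}
    (hw : ∀ t, HasDerivAt w (w' t) t) (hw' : HasDerivAt w' c x) (hc : 0 < c) :
    ¬IsLocalMax w x := by
  intro hmax
  have hderiv : deriv w = w' := funext fun t => (hw t).deriv
  have hmin : IsLocalMin w x := isLocalMin_of_deriv_deriv_pos (by rwa [hderiv, hw'.deriv])
    (by rw [hderiv]; exact hmax.hasDerivAt_eq_zero (hw x)) (hw x).continuousAt
  have hconst : w =ᶠ[𝓝 x] fun _ => w x := by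
    filter_upwards [hmax, hmin] with y h₁ h₂ using le_antisymm h₁ h₂
  have hzero : w' =ᶠ[𝓝 x] fun _ => 0 := by
    filter_upwards [hconst.eventuallyEq_nhds] with y hy
    exact (hw y).unique ((hasDerivAt_const y (w x)).congr_of_eventuallyEq hy)
  exact hc.ne' ((hw'.congr_of_eventuallyEq hzero.symm).unique (hasDerivAt_const x 0))

lemma nonpos_on_Icc_of_deriv2_pos {w w' w'' : ℝ → ℝ} {a b : ℝ}
    (hw : ∀ t, HasDerivAt w (w' t) t) (hw' : ∀ t, HasDerivAt w' (w'' t) t)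
    (hpos : ∀ t ∈ Ioo a b, 0 < w t → 0 < w'' t) (ha : w a ≤ 0) (hb : w b ≤ 0) :
    ∀ t ∈ Icc a b, w t ≤ 0 := by
  intro t ht
  by_contra! hwt
  have hcont : Continuous w := continuous_iff_continuousAt.2 fun t => (hw t).continuousAt
  obtain ⟨m, hm, hmax⟩ := isCompact_Icc.exists_isMaxOn ⟨t, ht⟩ hcont.continuousOn
  have hwm : 0 < w m := hwt.trans_le (hmax ht)
  have hm' : m ∈ Ioo a b :=
    ⟨hm.1.lt_of_ne (by rintro rfl; linarith), hm.2.lt_of_ne (by rintro rfl; linarith)⟩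
  exact not_isLocalMax_of_hasDerivAt_deriv_pos hw (hw' m) (hpos m hm' hwm)
    (hmax.isLocalMax (Icc_mem_nhds hm'.1 hm'.2))

lemma le_mul_exp_of_mul_le_deriv2 {φ φ' φ'' : ℝ → ℝ} {T l M a : ℝ} (hl : 0 < l)
    (hφ : ∀ t, HasDerivAt φ (φ' t) t) (hφ' : ∀ t, HasDerivAt φ' (φ'' t) t)
    (hsub : ∀ t ≥ T, l * φ t ≤ φ'' t) (hM : ∀ t ≥ T, φ t ≤ M) (ha : 0 ≤ a) (hT : φ T ≤ a) :
    ∀ t ≥ T, φ t ≤ a * exp (-√l * (t - T)) := by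
  intro t ht
  set k := √l
  have hk : k * k = l := mul_self_sqrt hl.le
  suffices h : ∀ η > 0, φ t ≤ a * exp (-k * (t - T)) + η * exp (k * (t - T)) by
    refine le_of_forall_pos_le_add fun ε hε => ?_
    simpa [div_mul_cancel₀ _ (exp_pos _).ne'] using h (ε / exp (k * (t - T))) (by positivity)
  intro η hη
  have hE := hasDerivAt_exp_mul_sub (-k) T
  have hE' := hasDerivAt_exp_mul_sub k T
  have hshift : Tendsto (fun s : ℝ => s - T) atTop atTop := by
    simpa only [sub_eq_add_neg, id] using tendsto_atTop_add_const_right atTop (-T) tendsto_id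
  have hgrow : Tendsto (fun s => η * exp (k * (s - T))) atTop atTop :=
    (tendsto_exp_atTop.comp (hshift.const_mul_atTop (sqrt_pos.2 hl))).const_mul_atTop hη
  obtain ⟨R, hR, hRt⟩ := ((hgrow.eventually_ge_atTop M).and (eventually_ge_atTop t)).exists
  -- `exp (∓ k (s - T))` solve `y'' = l y`, so subtracting them keeps `φ` a subsolution
  have := nonpos_on_Icc_of_deriv2_pos
    (w := fun s => φ s - (a * exp (-k * (s - T)) + η * exp (k * (s - T))))
    (fun s => (hφ s).sub (((hE s).const_mul a).add ((hE' s).const_mul η)))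
    (fun s => (hφ' s).sub ((((hE s).const_mul (-k)).const_mul a).add
      (((hE' s).const_mul k).const_mul η)))
    (fun s hs hws => by
      have := hsub s hs.1.le
      linear_combination this + mul_pos hl hws +
        (a * exp (-k * (s - T)) + η * exp (k * (s - T))) * hk)
    (by simp; linarith)
    (by have := hM R (ht.trans hRt); nlinarith [exp_pos (-k * (R - T))])
    t ⟨ht, hRt⟩
  linarith

lemma exists_le_mul_exp_of_le_on_Ici {f : ℝ → ℝ} {k M T C : ℝ} (hk : 0 ≤ k)
    (hM : ∀ t, f t ≤ M) (hf : ∀ t ≥ T, f t ≤ C * exp (-k * (t - T))) :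
    ∃ C', ∀ t, f t ≤ C' * exp (-k * t) := by
  refine ⟨max C |M| * exp (k * T), fun t => ?_⟩
  rw [mul_assoc, ← exp_add, show k * T + -k * t = -k * (t - T) by ring]
  rcases le_total T t with hTt | htT
  · refine (hf t hTt).trans (mul_le_mul_of_nonneg_right (le_max_left _ _) (exp_pos _).le)
  · have h1 : 1 ≤ exp (-k * (t - T)) := one_le_exp (by nlinarith)
    have := (hM t).trans ((le_abs_self M).trans (le_max_right C |M|))
    nlinarith [(abs_nonneg M).trans (le_max_right C |M|)]

/-- The operator `(D² - ℓ₁)(D² - ℓ₂)`. -/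
def fourthOrderOp (ℓ₁ ℓ₂ : ℝ) (v : ℝ → ℝ) (t : ℝ) : ℝ :=
  iteratedDeriv 4 v t - (ℓ₁ + ℓ₂) * iteratedDeriv 2 v t + ℓ₁ * ℓ₂ * v t

lemma fourthOrderOp_comp_neg (ℓ₁ ℓ₂ : ℝ) (v : ℝ → ℝ) (t : ℝ) :
    fourthOrderOp ℓ₁ ℓ₂ (fun s => v (-s)) t = fourthOrderOp ℓ₁ ℓ₂ v (-t) := by
  simp only [fourthOrderOp, iteratedDeriv_comp_neg, smul_eq_mul]
  norm_num

section FourthOrder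

variable {v : ℝ → ℝ} {ℓ₁ ℓ₂ M R : ℝ}

lemma iteratedDeriv_three_sub_pos_of_le_neg (hv : ContDiff ℝ 4 v) (hpos : ∀ t, 0 < v t)
    (hM : ∀ t, v t ≤ M) (hℓ₂ : 0 < ℓ₂) (hR : ∀ t, fourthOrderOp ℓ₁ ℓ₂ v t ≤ R) {K t₀ : ℝ}
    (hK₁ : R + 1 ≤ ℓ₂ * K) (hK₂ : |ℓ₁| * M + 1 ≤ K)
    (h₀ : iteratedDeriv 2 v t₀ - ℓ₁ * v t₀ ≤ -K) :
    0 < iteratedDeriv 3 v t₀ - ℓ₁ * iteratedDeriv 1 v t₀ := by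
  by_contra! h₀'
  have hD := fun k (hk : k < 4) => hv.hasDerivAt_iteratedDeriv hk
  have hD₀ := hv.hasDerivAt_iteratedDeriv_one (by norm_num)
  -- `y := v'' - ℓ₁ v + K` satisfies `y'' = ℓ₂ (y - K) + (D² - ℓ₁)(D² - ℓ₂) v ≤ ℓ₂ y - 1`
  have hstay := nonpos_on_Ici_of_deriv2_neg (y := fun t => iteratedDeriv 2 v t - ℓ₁ * v t + K)
    (fun t => ((hD 2 (by norm_num) t).sub ((hD₀ t).const_mul ℓ₁)).add_const K)
    (fun t => (hD 3 (by norm_num) t).sub ((hD 1 (by norm_num) t).const_mul ℓ₁))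
    ((hv.continuous_iteratedDeriv 4 le_rfl).sub
      (continuous_const.mul (hv.continuous_iteratedDeriv 2 (by norm_num))))
    (fun t hyt => by have := hR t; simp only [fourthOrderOp] at this; nlinarith)
    (by linarith) h₀'
  obtain ⟨t, ht⟩ := exists_neg_of_deriv2_le_neg_one hD₀ (hD 1 (by norm_num)) (a := t₀)
    fun t ht => by
      have := hstay t ht
      nlinarith [le_abs_self ℓ₁, hM t, hpos t, abs_nonneg ℓ₁]
  exact (hpos t).not_gt ht

lemma exists_neg_le_iteratedDeriv_two_sub (hv : ContDiff ℝ 4 v) (hpos : ∀ t, 0 < v t)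
    (hM : ∀ t, v t ≤ M) (hℓ₂ : 0 < ℓ₂) (hR : ∀ t, fourthOrderOp ℓ₁ ℓ₂ v t ≤ R) :
    ∃ K, ∀ t, -K ≤ iteratedDeriv 2 v t - ℓ₁ * v t := by
  set K := max ((R + 1) / ℓ₂) (|ℓ₁| * M + 1)
  have hK₁ : R + 1 ≤ ℓ₂ * K := by
    rw [← div_le_iff₀' hℓ₂]; exact le_max_left _ _
  refine ⟨K, fun t₀ => ?_⟩
  by_contra! h₀
  have hright := iteratedDeriv_three_sub_pos_of_le_neg hv hpos hM hℓ₂ hR hK₁ (le_max_right _ _)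
    h₀.le
  -- the same holds for `t ↦ v (-t)`, whose odd derivatives change sign
  have hleft := iteratedDeriv_three_sub_pos_of_le_neg (v := fun s => v (-s)) (t₀ := -t₀)
    (hv.comp contDiff_neg) (fun s => hpos _) (fun s => hM _) hℓ₂
    (fun s => (fourthOrderOp_comp_neg ℓ₁ ℓ₂ v s).trans_le (hR _)) hK₁ (le_max_right _ _)
    (by norm_num only [iteratedDeriv_comp_neg, smul_eq_mul, neg_neg]; linarith)
  norm_num only [iteratedDeriv_comp_neg, smul_eq_mul, neg_neg] at hleft
  linarith

lemma exists_sub_iteratedDeriv_two_le_mul_exp (hv : ContDiff ℝ 4 v) (hpos : ∀ t, 0 < v t)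
    (hM : ∀ t, v t ≤ M) (hℓ₂ : 0 < ℓ₂) (hℓ : ℓ₂ < ℓ₁) (hR : ∀ t, fourthOrderOp ℓ₁ ℓ₂ v t ≤ R)
    {T : ℝ} (htail : ∀ t ≥ T, fourthOrderOp ℓ₁ ℓ₂ v t ≤ 0) :
    ∃ a ≥ 0, ∀ t ≥ T, ℓ₂ * v t - iteratedDeriv 2 v t ≤ a * exp (-√ℓ₁ * (t - T)) := by
  have hD := fun k (hk : k < 4) => hv.hasDerivAt_iteratedDeriv hk
  obtain ⟨K, hK⟩ := exists_neg_le_iteratedDeriv_two_sub hv hpos hM hℓ₂ hR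
  refine ⟨max (ℓ₂ * v T - iteratedDeriv 2 v T) 0, le_max_right _ _, ?_⟩
  exact le_mul_exp_of_mul_le_deriv2 (hℓ₂.trans hℓ) (M := K)
    (fun t => ((hv.hasDerivAt_iteratedDeriv_one (by norm_num) t).const_mul ℓ₂).sub
      (hD 2 (by norm_num) t))
    (fun t => ((hD 1 (by norm_num) t).const_mul ℓ₂).sub (hD 3 (by norm_num) t))
    (fun t ht => by have := htail t ht; simp only [fourthOrderOp] at this; linarith)
    (fun t _ => by nlinarith [hK t, hpos t]) (le_max_right _ _) (le_max_left _ _)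

lemma exists_le_mul_exp_of_fourthOrderOp_nonpos (hv : ContDiff ℝ 4 v) (hpos : ∀ t, 0 < v t)
    (hM : ∀ t, v t ≤ M) (hℓ₂ : 0 < ℓ₂) (hℓ : ℓ₂ < ℓ₁) (hR : ∀ t, fourthOrderOp ℓ₁ ℓ₂ v t ≤ R)
    {T : ℝ} (htail : ∀ t ≥ T, fourthOrderOp ℓ₁ ℓ₂ v t ≤ 0) :
    ∃ C, ∀ t, v t ≤ C * exp (-√ℓ₂ * t) := by
  have hℓ₁ : 0 < ℓ₁ := hℓ₂.trans hℓ
  obtain ⟨a, ha, hφ⟩ := exists_sub_iteratedDeriv_two_le_mul_exp hv hpos hM hℓ₂ hℓ hR htail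
  -- `w := v + c E` with `c (ℓ₁ - ℓ₂) = a` satisfies `w'' - ℓ₂ w = a E - (ℓ₂ v - v'') ≥ 0`
  set c := a / (ℓ₁ - ℓ₂)
  have hc : 0 ≤ c := div_nonneg ha (by linarith)
  have hca : c * (ℓ₁ - ℓ₂) = a := div_mul_cancel₀ _ (by linarith)
  set E := fun t => exp (-√ℓ₁ * (t - T))
  have hE := hasDerivAt_exp_mul_sub (-√ℓ₁) T
  have hsq : √ℓ₁ * √ℓ₁ = ℓ₁ := mul_self_sqrt hℓ₁.le
  set w := fun t => v t + c * E t
  have hw := le_mul_exp_of_mul_le_deriv2 hℓ₂ (φ := w) (M := M + c) (T := T)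
    (a := max (w T) 0)
    (fun t => (hv.hasDerivAt_iteratedDeriv_one (by norm_num) t).add ((hE t).const_mul c))
    (fun t => ((hv.hasDerivAt_iteratedDeriv (by norm_num : 1 < 4) t).add
      (((hE t).const_mul (-√ℓ₁)).const_mul c)).congr_deriv
      (show _ = iteratedDeriv 2 v t + c * (ℓ₁ * E t) by linear_combination c * E t * hsq))
    (fun t ht => by
      have key : c * (ℓ₁ * E t) - ℓ₂ * (c * E t) = a * E t := by rw [← hca]; ring
      have := hφ t ht
      simp only [w] at this ⊢
      linarith)
    (fun t ht => by
      have : E t ≤ 1 := exp_le_one_iff.2 (by nlinarith [sqrt_nonneg ℓ₁])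
      have := hM t
      simp only [w]; nlinarith)
    (le_max_right _ _) (le_max_left _ _)
  exact exists_le_mul_exp_of_le_on_Ici (sqrt_nonneg ℓ₂) hM fun t ht => by
    have := hw t ht
    have : 0 ≤ c * E t := mul_nonneg hc (exp_pos _).le
    simp only [w] at *
    linarith

theorem exists_le_mul_exp_abs_of_fourthOrderOp_nonpos (hv : ContDiff ℝ 4 v)
    (hpos : ∀ t, 0 < v t) (hM : ∀ t, v t ≤ M) (hℓ₂ : 0 < ℓ₂) (hℓ : ℓ₂ < ℓ₁)
    (hR : ∀ t, fourthOrderOp ℓ₁ ℓ₂ v t ≤ R)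
    (htail : ∀ᶠ t in cocompact ℝ, fourthOrderOp ℓ₁ ℓ₂ v t ≤ 0) :
    ∃ C, ∀ t, v t ≤ C * exp (-√ℓ₂ * |t|) := by
  rw [cocompact_eq_atBot_atTop, eventually_sup] at htail
  obtain ⟨T₁, hT₁⟩ := eventually_atTop.1 htail.2
  obtain ⟨T₂, hT₂⟩ := eventually_atBot.1 htail.1
  obtain ⟨C₁, hC₁⟩ := exists_le_mul_exp_of_fourthOrderOp_nonpos hv hpos hM hℓ₂ hℓ hR hT₁
  obtain ⟨C₂, hC₂⟩ := exists_le_mul_exp_of_fourthOrderOp_nonpos (v := fun s => v (-s))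
    (hv.comp contDiff_neg) (fun s => hpos _) (fun s => hM _) hℓ₂ hℓ
    (fun s => (fourthOrderOp_comp_neg ℓ₁ ℓ₂ v s).trans_le (hR _)) (T := -T₂)
    fun s hs => (fourthOrderOp_comp_neg ℓ₁ ℓ₂ v s).trans_le (hT₂ _ (by linarith))
  refine ⟨max C₁ C₂, fun t => ?_⟩
  rcases le_total 0 t with ht | ht
  · rw [abs_of_nonneg ht]
    exact (hC₁ t).trans (mul_le_mul_of_nonneg_right (le_max_left _ _) (exp_pos _).le)
  · rw [abs_of_nonpos ht]
    simpa using (hC₂ (-t)).trans (mul_le_mul_of_nonneg_right (le_max_right _ _) (exp_pos _).le)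

end FourthOrder

lemma IsSol.fourthOrderOp_eq {A B b ℓ₁ ℓ₂ : ℝ} {g v : ℝ → ℝ} (h : IsSol A B g v)
    (hsum : ℓ₁ + ℓ₂ = A) (hprod : ℓ₁ * ℓ₂ = B - b) (t : ℝ) :
    fourthOrderOp ℓ₁ ℓ₂ v t = g (v t) - b * v t := by
  rw [fourthOrderOp, hsum, hprod, ← h t]
  ring

lemma exists_factorization {A c : ℝ} (hA : 0 < A) (hc : 0 < c) (hdisc : 4 * c < A ^ 2) :
    ∃ ℓ₁, 0 < (A - √(A ^ 2 - 4 * c)) / 2 ∧ (A - √(A ^ 2 - 4 * c)) / 2 < ℓ₁ ∧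
      ℓ₁ + (A - √(A ^ 2 - 4 * c)) / 2 = A ∧ ℓ₁ * ((A - √(A ^ 2 - 4 * c)) / 2) = c := by
  set s := √(A ^ 2 - 4 * c)
  have hs : s * s = A ^ 2 - 4 * c := mul_self_sqrt (by linarith)
  have hs0 : 0 < s := sqrt_pos.2 (by linarith)
  have hsA : s < A := by nlinarith
  exact ⟨(A + s) / 2, by linarith, by linarith, by ring, by linear_combination -hs / 4⟩

lemma exists_lt_sqrt_smaller_root {A B β x : ℝ} (hβB : β < B)
    (hx : x < √((A - √(A ^ 2 - 4 * (B - β))) / 2)) :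
    ∃ b ∈ Ioo β B, x < √((A - √(A ^ 2 - 4 * (B - b))) / 2) := by
  have hcont : Tendsto (fun b => √((A - √(A ^ 2 - 4 * (B - b))) / 2)) (𝓝[>] β)
      (𝓝 √((A - √(A ^ 2 - 4 * (B - β))) / 2)) :=
    (Continuous.tendsto (by fun_prop) β).mono_left nhdsWithin_le_nhds
  obtain ⟨b, hb, hbB⟩ := ((hcont.eventually (lt_mem_nhds hx)).and (Ioo_mem_nhdsGT hβB)).exists
  exact ⟨b, hbB, hb⟩

lemma eventually_le_mul_of_tendsto_deriv {g : ℝ → ℝ} {β b : ℝ}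
    (hg : DifferentiableOn ℝ g (Ioi 0)) (hg0 : Tendsto g (𝓝[>] 0) (𝓝 0)) (h00 : g 0 = 0)
    (hβ : Tendsto (deriv g) (𝓝[>] 0) (𝓝 β)) (hb : β < b) : ∀ᶠ s in 𝓝[>] 0, g s ≤ b * s := by
  have hcont : ContinuousWithinAt g (Ici 0) 0 :=
    continuousWithinAt_Ioi_iff_Ici.1 (by rwa [ContinuousWithinAt, h00])
  obtain ⟨u, hu, hsub⟩ := mem_nhdsGT_iff_exists_Ioo_subset.1 (hβ.eventually (gt_mem_nhds hb))
  filter_upwards [Ioo_mem_nhdsGT hu] with s hs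
  have hcont_s : ContinuousOn g (Icc 0 s) := by
    rintro x ⟨hx, -⟩
    rcases hx.eq_or_lt with rfl | hx
    · exact hcont.mono Icc_subset_Ici_self
    · exact (hg.differentiableAt (Ioi_mem_nhds hx)).continuousAt.continuousWithinAt
  have := (convex_Icc 0 s).image_sub_le_mul_sub_of_deriv_le hcont_s
    (by rw [interior_Icc]; exact hg.mono Ioo_subset_Ioi_self)
    (fun x hx => by
      rw [interior_Icc] at hx
      exact (hsub ⟨hx.1, hx.2.trans hs.2⟩).le)
    0 (left_mem_Icc.2 hs.1.le) s (right_mem_Icc.2 hs.1.le) hs.1.le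
  simpa [h00] using this

theorem stmt_5 (n : ℕ) (hn : 5 ≤ n) (g : ℝ → ℝ) (hg : CondG n g)
    (A B : ℝ) (hA : A = ((n : ℝ) * ((n : ℝ) - 4) + 8) / 2)
    (hB : B = (n : ℝ) ^ 2 * ((n : ℝ) - 4) ^ 2 / 16)
    (β : ℝ) (hβ : Filter.Tendsto (deriv g) (nhdsWithin 0 (Set.Ioi 0)) (nhds β))
    (μ : ℝ) (hμ : μ = (A - Real.sqrt (A ^ 2 - 4 * (B - β))) / 2)
    (v : ℝ → ℝ) (hv4 : ContDiff ℝ 4 v) (hvpos : ∀ t, 0 < v t) (hvsol : IsSol A B g v)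
    (hlimT : Filter.Tendsto v Filter.atTop (nhds 0))
    (hlimB : Filter.Tendsto v Filter.atBot (nhds 0)) :
    ∀ ε > 0, ∃ C : ℝ, ∀ t : ℝ, v t ≤ C * Real.exp (-(Real.sqrt μ - ε) * |t|) := by
  obtain ⟨hgC1, hgpos, hg0, -, ⟨β', hβ'0, hβ'B, hβ'⟩, -, hg00⟩ := hg
  obtain rfl : β = β' := tendsto_nhds_unique hβ hβ'
  rw [← hB] at hβ'B
  have hn' : (5 : ℝ) ≤ n := by exact_mod_cast hn
  have hA0 : 0 < A := by rw [hA]; nlinarith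
  have hAB : 4 * B < A ^ 2 := by rw [hA, hB]; nlinarith
  have hv0 : Tendsto v (cocompact ℝ) (𝓝[>] 0) :=
    tendsto_nhdsWithin_of_tendsto_nhds_of_eventually_within _
      (by rw [cocompact_eq_atBot_atTop]; exact hlimB.sup hlimT) (.of_forall hvpos)
  obtain ⟨_, hM⟩ := hv4.continuous.exists_forall_ge' 0
    ((tendsto_nhdsWithin_iff.1 hv0).1.eventually (eventually_le_nhds (hvpos 0)))
  obtain ⟨t₂, hR⟩ := (show Continuous fun t => g (v t) from
      hgC1.continuousOn.comp_continuous hv4.continuous hvpos).exists_forall_ge' 0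
    ((hg0.comp hv0).eventually (eventually_le_nhds (hgpos _ (hvpos 0))))
  intro ε hε
  obtain ⟨b, ⟨hβb, hbB⟩, hb⟩ := exists_lt_sqrt_smaller_root hβ'B (x := √μ - ε)
    (by rw [← hμ]; linarith)
  obtain ⟨ℓ₁, hℓ₂, hℓ, hsum, hprod⟩ := exists_factorization hA0 (sub_pos.2 hbB) (by linarith)
  have hL := hvsol.fourthOrderOp_eq hsum hprod
  obtain ⟨C, hC⟩ := exists_le_mul_exp_abs_of_fourthOrderOp_nonpos (R := g (v t₂)) hv4 hvpos hM
    hℓ₂ hℓ (fun t => by rw [hL]; linarith [hR t, mul_nonneg (hβ'0.trans hβb.le) (hvpos t).le])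
    ((hv0.eventually (eventually_le_mul_of_tendsto_deriv
      (hgC1.differentiableOn one_ne_zero) hg0 hg00 hβ hβb)).mono fun t ht => by rw [hL]; linarith)
  have hC0 : 0 ≤ C := by simpa using (hvpos 0).le.trans (hC 0)
  exact ⟨C, fun t => (hC t).trans (by gcongr)⟩
end
end

section
/- Let v ∈ C⁴((0, ∞)) be a positive solution of the ODE v''''(t) − A·v''(t) + B·v(t) = g(v(t)) on (0, ∞), and suppose that the limit a := lim_{t→∞} v(t) exists in [0, ∞] (as an extended real number). Then either a = 0 or a = a₀. -/
/-
With `w = v'' - A v` the equation reads `w'' = g(v) - B v`. If `v → ℓ ∈ (0, ∞)` and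
`g ℓ ≠ B ℓ`, then `w''` has a nonzero limit, and integrating twice for `w` and twice more for `v`
forces `v → ±∞`; hence `g ℓ = B ℓ`, and `ℓ = a₀` because `g t / t` is strictly increasing.
If `v → ∞`, the growth `g t ≥ c t ^ q` gives `w'' ≥ (c/2) v ^ q` eventually, which makes
`v', v'', v'''` eventually positive and `v'''' ≥ (c/2) v ^ q`. Once `v` and its first three
derivatives lie above those of the explicit blow-up solution `K (t₀ - t) ^ (-4/(q-1))` of
`u'''' = (c/2) u ^ q` at some time `T` (true for `t₀` large), they stay above it up to `t₀`,
so `v` cannot be finite at `t₀`.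
-/

open Real Filter Set

noncomputable section

open Topology

theorem ContDiffOn.hasDerivAt_iteratedDeriv {f : ℝ → ℝ} {s : Set ℝ} {n k : ℕ}
    (hf : ContDiffOn ℝ n f s) (hs : IsOpen s) (hk : k < n) {x : ℝ} (hx : x ∈ s) :
    HasDerivAt (iteratedDeriv k f) (iteratedDeriv (k + 1) f x) x := by
  have hd : DifferentiableAt ℝ (iteratedDerivWithin k f s) x :=
    (hf.differentiableOn_iteratedDerivWithin (by exact_mod_cast hk) hs.uniqueDiffOn x hx
      ).differentiableAt (hs.mem_nhds hx)
  rw [iteratedDeriv_succ]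
  exact (hd.congr_of_eventuallyEq (eventuallyEq_of_mem (hs.mem_nhds hx)
    (iteratedDerivWithin_of_isOpen hs)).symm).hasDerivAt

theorem monotoneOn_of_hasDerivAt_nonneg {D : Set ℝ} (hD : Convex ℝ D) {f f' : ℝ → ℝ}
    (hf : ∀ x ∈ D, HasDerivAt f (f' x) x) (hf' : ∀ x ∈ interior D, 0 ≤ f' x) :
    MonotoneOn f D :=
  monotoneOn_of_hasDerivWithinAt_nonneg hD
    (fun x hx => (hf x hx).continuousAt.continuousWithinAt)
    (fun x hx => (hf x (interior_subset hx)).hasDerivWithinAt) hf'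

theorem tendsto_atTop_of_hasDerivAt_of_le {f f' : ℝ → ℝ} {c : ℝ} (hc : 0 < c)
    (hf : ∀ᶠ x in atTop, HasDerivAt f (f' x) x) (hf' : ∀ᶠ x in atTop, c ≤ f' x) :
    Tendsto f atTop atTop := by
  obtain ⟨T, hT⟩ := eventually_atTop.1 (hf.and hf')
  have hmono : MonotoneOn (fun x => f x - c * x) (Ici T) :=
    monotoneOn_of_hasDerivAt_nonneg (convex_Ici T)
      (fun x hx => (hT x hx).1.sub ((hasDerivAt_id x).const_mul c))
      (fun x hx => by
        rw [interior_Ici] at hx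
        simpa using (hT x (le_of_lt hx)).2)
  refine tendsto_atTop_mono' atTop ?_
    (tendsto_atTop_add_const_left _ (f T - c * T) (tendsto_id.const_mul_atTop hc))
  filter_upwards [eventually_ge_atTop T] with x hx
  have := hmono self_mem_Ici hx hx
  simp only [id] at this ⊢
  linarith

theorem tendsto_atTop_of_hasDerivAt_of_tendsto_atTop {f f' : ℝ → ℝ}
    (hf : ∀ᶠ x in atTop, HasDerivAt f (f' x) x) (hf' : Tendsto f' atTop atTop) :
    Tendsto f atTop atTop :=
  tendsto_atTop_of_hasDerivAt_of_le one_pos hf (hf'.eventually_ge_atTop 1)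

theorem pos_on_Icc_of_hasDerivAt_chain {d : ℕ → ℝ → ℝ} {a b : ℝ} {n : ℕ}
    (hd : ∀ k < n, ∀ x ∈ Icc a b, HasDerivAt (d k) (d (k + 1) x) x)
    (hinit : ∀ k < n, 0 < d k a) (htop : ∀ x ∈ Ioo a b, 0 ≤ d n x) :
    ∀ k < n, ∀ x ∈ Icc a b, 0 < d k x := by
  induction n generalizing d with
  | zero => simp
  | succ n ih =>
    have hsucc := ih (d := fun k => d (k + 1)) (fun k hk => hd (k + 1) (by omega))
      (fun k hk => hinit (k + 1) (by omega)) htop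
    have hd1 : ∀ x ∈ Ioo a b, 0 ≤ d 1 x := by
      rcases n with _ | n
      · exact htop
      · exact fun x hx => (hsucc 0 (by omega) x (Ioo_subset_Icc_self hx)).le
    have hmono : MonotoneOn (d 0) (Icc a b) :=
      monotoneOn_of_hasDerivAt_nonneg (convex_Icc a b) (hd 0 (by omega))
        (by rwa [interior_Icc])
    rintro (_ | k) hk x hx
    · exact (hinit 0 hk).trans_le (hmono (left_mem_Icc.2 (hx.1.trans hx.2)) hx hx.1)
    · exact hsucc k (by omega) x hx

theorem pos_on_Ico_of_hasDerivAt_chain_of_imp {d : ℕ → ℝ → ℝ} {a b : ℝ} {n : ℕ} (hn : 0 < n)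
    (hd : ∀ k < n, ∀ x ∈ Ico a b, HasDerivAt (d k) (d (k + 1) x) x)
    (hinit : ∀ k < n, 0 < d k a) (htop : ∀ x ∈ Ico a b, 0 < d 0 x → 0 ≤ d n x) :
    ∀ x ∈ Ico a b, 0 < d 0 x := by
  by_contra! hneg
  obtain ⟨s, hs, hds⟩ := hneg
  set S := Icc a s ∩ d 0 ⁻¹' Iic 0
  have hcont : ContinuousOn (d 0) (Icc a s) := fun x hx =>
    (hd 0 hn x ⟨hx.1, hx.2.trans_lt hs.2⟩).continuousAt.continuousWithinAt
  have hτS : sInf S ∈ S :=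
    (hcont.preimage_isClosed_of_isClosed isClosed_Icc isClosed_Iic).csInf_mem
      ⟨s, ⟨hs.1, le_rfl⟩, hds⟩ ⟨a, fun x hx => hx.1.1⟩
  set τ := sInf S
  have hbefore : ∀ x ∈ Ico a τ, 0 < d 0 x := by
    intro x hx
    by_contra! hx0
    have hxS : x ∈ S := ⟨⟨hx.1, hx.2.le.trans hτS.1.2⟩, hx0⟩
    exact (csInf_le ⟨a, fun y hy => hy.1.1⟩ hxS).not_gt hx.2
  have hsub : Icc a τ ⊆ Ico a b := fun x hx => ⟨hx.1, hx.2.trans_lt (hτS.1.2.trans_lt hs.2)⟩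
  have := pos_on_Icc_of_hasDerivAt_chain (fun k hk x hx => hd k hk x (hsub hx)) hinit
    (fun x hx => htop x (hsub (Ioo_subset_Icc_self hx)) (hbefore x (Ioo_subset_Ico_self hx)))
    0 hn τ ⟨hτS.1.1, le_rfl⟩
  exact this.not_ge hτS.2

/-- The `k`-th derivative of `s ↦ K (t₀ - s) ^ (-α)`. -/
def blowUpProfile (K α t₀ : ℝ) (k : ℕ) (s : ℝ) : ℝ :=
  K * (∏ j ∈ Finset.range k, (α + j)) * (t₀ - s) ^ (-(α + k))

theorem hasDerivAt_blowUpProfile (K α t₀ : ℝ) (k : ℕ) {s : ℝ} (hs : s < t₀) :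
    HasDerivAt (blowUpProfile K α t₀ k) (blowUpProfile K α t₀ (k + 1) s) s := by
  have h : HasDerivAt (blowUpProfile K α t₀ k) _ s :=
    (((hasDerivAt_id s).const_sub t₀).rpow_const (p := -(α + k))
      (Or.inl (sub_pos.2 hs).ne')).const_mul (K * ∏ j ∈ Finset.range k, (α + j))
  convert h using 1
  simp only [blowUpProfile, Finset.prod_range_succ, id]
  push_cast
  ring_nf

theorem blowUpProfile_zero (K α t₀ : ℝ) :
    blowUpProfile K α t₀ 0 = fun s => K * (t₀ - s) ^ (-α) := by
  ext s; simp [blowUpProfile]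

theorem tendsto_blowUpProfile_atTop (K α T : ℝ) (hα : 0 < α) (k : ℕ) :
    Tendsto (fun t₀ => blowUpProfile K α t₀ k T) atTop (𝓝 0) := by
  have h := (tendsto_rpow_neg_atTop (y := α + k) (by positivity)).comp
    (tendsto_atTop_add_const_right atTop (-T) tendsto_id)
  simpa [blowUpProfile, Function.comp_def, sub_eq_add_neg] using h.const_mul _

theorem tendsto_blowUpProfile_nhdsLT {K α : ℝ} (hK : 0 < K) (hα : 0 < α) (t₀ : ℝ) :
    Tendsto (blowUpProfile K α t₀ 0) (𝓝[<] t₀) atTop := by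
  have hsub : Tendsto (fun s => t₀ - s) (𝓝[<] t₀) (𝓝[>] 0) := by
    refine tendsto_nhdsWithin_of_tendsto_nhds_of_eventually_within _ ?_ ?_
    · have := ((continuous_sub_left t₀).tendsto t₀).mono_left (nhdsWithin_le_nhds (s := Iio t₀))
      simpa using this
    · filter_upwards [self_mem_nhdsWithin] with s (hs : s < t₀) using sub_pos.2 hs
  rw [blowUpProfile_zero]
  exact ((tendsto_rpow_neg_nhdsGT_zero (neg_neg_of_pos hα)).comp hsub).const_mul_atTop hK

theorem blowUpProfile_eq_mul_rpow {K α c q t₀ s : ℝ} {n : ℕ} (hK : 0 < K) (hs : s < t₀)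
    (hα : α * (q - 1) = n) (hKc : c * K ^ (q - 1) = ∏ j ∈ Finset.range n, (α + j)) :
    blowUpProfile K α t₀ n s = c * blowUpProfile K α t₀ 0 s ^ q := by
  have hx : 0 < t₀ - s := sub_pos.2 hs
  rw [blowUpProfile_zero, mul_rpow hK.le (rpow_nonneg hx.le _), ← rpow_mul hx.le, blowUpProfile,
    ← hKc, rpow_sub_one hK.ne']
  have : -α * q = -(α + n) := by linarith
  rw [this]
  field_simp

theorem false_of_rpow_le_deriv_chain {u : ℕ → ℝ → ℝ} {n : ℕ} {T c q : ℝ} (hn : 0 < n)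
    (hc : 0 < c) (hq : 1 < q) (hu : ∀ k < n, ∀ t ≥ T, HasDerivAt (u k) (u (k + 1) t) t)
    (hpos : ∀ k < n, 0 < u k T) (hge : ∀ t ≥ T, c * u 0 t ^ q ≤ u n t) : False := by
  have hq1 : 0 < q - 1 := sub_pos.2 hq
  -- with these `α` and `K`, the profile `K (t₀ - s) ^ (-α)` solves `U⁽ⁿ⁾ = c U ^ q` exactly
  set α : ℝ := n / (q - 1)
  have hα : 0 < α := by positivity
  have hαq : α * (q - 1) = n := div_mul_cancel₀ _ hq1.ne'
  set P := ∏ j ∈ Finset.range n, (α + j)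
  have hP : 0 < P := Finset.prod_pos fun j _ => by positivity
  set K := (P / c) ^ (1 / (q - 1))
  have hK : 0 < K := by positivity
  have hKc : c * K ^ (q - 1) = P := by
    rw [← rpow_mul (by positivity), one_div_mul_cancel hq1.ne', rpow_one]
    field_simp
  obtain ⟨t₀, hTt₀, hinit⟩ : ∃ t₀, T < t₀ ∧ ∀ k < n, blowUpProfile K α t₀ k T < u k T := by
    have hsmall : ∀ᶠ t₀ in atTop, ∀ k ∈ Finset.range n, blowUpProfile K α t₀ k T < u k T :=
      (Finset.range n).eventually_all.2 fun k hk =>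
        (tendsto_blowUpProfile_atTop K α T hα k).eventually
          (gt_mem_nhds (hpos k (Finset.mem_range.1 hk)))
    obtain ⟨t₀, h1, h2⟩ := ((eventually_gt_atTop T).and hsmall).exists
    exact ⟨t₀, h1, fun k hk => h2 k (Finset.mem_range.2 hk)⟩
  have hcmp : ∀ s ∈ Ico T t₀, 0 < u 0 s - blowUpProfile K α t₀ 0 s :=
    pos_on_Ico_of_hasDerivAt_chain_of_imp (d := fun k s => u k s - blowUpProfile K α t₀ k s) hn
      (fun k hk s hs => (hu k hk s hs.1).sub (hasDerivAt_blowUpProfile K α t₀ k hs.2))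
      (fun k hk => sub_pos.2 (hinit k hk))
      (fun s hs h0 => by
        have hU0 : 0 < blowUpProfile K α t₀ 0 s := by
          rw [blowUpProfile_zero]
          exact mul_pos hK (rpow_pos_of_pos (sub_pos.2 hs.2) _)
        rw [sub_nonneg, blowUpProfile_eq_mul_rpow hK hs.2 hαq hKc]
        exact (mul_le_mul_of_nonneg_left (rpow_le_rpow hU0.le (sub_pos.1 h0).le (by linarith))
          hc.le).trans (hge s hs.1))
  have hblow : Tendsto (u 0) (𝓝[<] t₀) atTop := by
    refine tendsto_atTop_mono' _ ?_ (tendsto_blowUpProfile_nhdsLT hK hα t₀)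
    filter_upwards [Ico_mem_nhdsLT hTt₀] with s hs
    linarith [hcmp s hs]
  exact not_tendsto_nhds_of_tendsto_atTop hblow _
    ((hu 0 hn t₀ hTt₀.le).continuousAt.tendsto.mono_left nhdsWithin_le_nhds)

section FourthOrder

variable {u : ℕ → ℝ → ℝ} {A : ℝ}

theorem tendsto_atTop_of_le_fourth_sub
    (hu : ∀ k < 4, ∀ᶠ t in atTop, HasDerivAt (u k) (u (k + 1) t) t) {c : ℝ} (hc : 0 < c)
    (h : ∀ᶠ t in atTop, c ≤ u 4 t - A * u 2 t) :
    Tendsto (fun t => u 3 t - A * u 1 t) atTop atTop ∧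
      Tendsto (fun t => u 2 t - A * u 0 t) atTop atTop := by
  have h3 : Tendsto (fun t => u 3 t - A * u 1 t) atTop atTop := by
    refine tendsto_atTop_of_hasDerivAt_of_le hc ?_ h
    filter_upwards [hu 3 (by norm_num), hu 1 (by norm_num)] with t h3 h1
    exact h3.sub (h1.const_mul A)
  refine ⟨h3, tendsto_atTop_of_hasDerivAt_of_tendsto_atTop ?_ h3⟩
  filter_upwards [hu 2 (by norm_num), hu 0 (by norm_num)] with t h2 h0
  exact h2.sub (h0.const_mul A)

theorem tendsto_atTop_of_tendsto_fourth_sub_pos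
    (hu : ∀ k < 4, ∀ᶠ t in atTop, HasDerivAt (u k) (u (k + 1) t) t) {ℓ L : ℝ} (hL : 0 < L)
    (hu0 : Tendsto (u 0) atTop (𝓝 ℓ))
    (hlim : Tendsto (fun t => u 4 t - A * u 2 t) atTop (𝓝 L)) : Tendsto (u 0) atTop atTop := by
  have hw := (tendsto_atTop_of_le_fourth_sub hu (half_pos hL)
    (hlim.eventually (eventually_ge_nhds (half_lt_self hL)))).2
  have h2 : Tendsto (u 2) atTop atTop :=
    (hw.atTop_add (hu0.const_mul A)).congr fun t => by ring
  exact tendsto_atTop_of_hasDerivAt_of_tendsto_atTop (hu 0 (by norm_num))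
    (tendsto_atTop_of_hasDerivAt_of_tendsto_atTop (hu 1 (by norm_num)) h2)

theorem eq_zero_of_tendsto_fourth_sub
    (hu : ∀ k < 4, ∀ᶠ t in atTop, HasDerivAt (u k) (u (k + 1) t) t) {ℓ L : ℝ}
    (hu0 : Tendsto (u 0) atTop (𝓝 ℓ))
    (hlim : Tendsto (fun t => u 4 t - A * u 2 t) atTop (𝓝 L)) : L = 0 := by
  rcases lt_trichotomy L 0 with hL | hL | hL
  · have hneg := tendsto_atTop_of_tendsto_fourth_sub_pos (u := fun k t => -u k t)
      (fun k hk => (hu k hk).mono fun t ht => ht.neg) (neg_pos.2 hL) hu0.neg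
      (by simpa [neg_sub_neg, sub_eq_add_neg, add_comm] using hlim.neg)
    exact absurd hu0.neg (not_tendsto_nhds_of_tendsto_atTop hneg _)
  · exact hL
  · exact absurd hu0 (not_tendsto_nhds_of_tendsto_atTop
      (tendsto_atTop_of_tendsto_fourth_sub_pos hu hL hu0 hlim) _)

theorem false_of_tendsto_atTop_of_rpow_le_fourth_sub (hA : 0 < A)
    (hu : ∀ k < 4, ∀ᶠ t in atTop, HasDerivAt (u k) (u (k + 1) t) t) {c q : ℝ} (hc : 0 < c)
    (hq : 1 < q) (hu0 : Tendsto (u 0) atTop atTop)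
    (hge : ∀ᶠ t in atTop, c * u 0 t ^ q ≤ u 4 t - A * u 2 t) : False := by
  have hu01 := hu0.eventually_ge_atTop 1
  obtain ⟨hw1, hw⟩ := tendsto_atTop_of_le_fourth_sub (A := A) hu hc (by
    filter_upwards [hge, hu01] with t ht h1
    nlinarith [one_le_rpow h1 (by linarith : 0 ≤ q)])
  have h2 : Tendsto (u 2) atTop atTop := by
    refine tendsto_atTop_mono' _ ?_ hw
    filter_upwards [hu01] with t ht
    nlinarith
  have h1 := tendsto_atTop_of_hasDerivAt_of_tendsto_atTop (hu 1 (by norm_num)) h2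
  have h3 : Tendsto (u 3) atTop atTop := by
    refine tendsto_atTop_mono' _ ?_ hw1
    filter_upwards [h1.eventually_ge_atTop 0] with t ht
    nlinarith
  obtain ⟨T, hT⟩ := eventually_atTop.1 <|
    ((Finset.range 4).eventually_all.2 fun k hk => hu k (Finset.mem_range.1 hk)).and <|
    hge.and <| hu01.and <| (h1.eventually_gt_atTop 0).and <|
    (h2.eventually_gt_atTop 0).and (h3.eventually_gt_atTop 0)
  refine false_of_rpow_le_deriv_chain (n := 4) (T := T) (by norm_num) hc hq
    (fun k hk t ht => (hT t ht).1 k (Finset.mem_range.2 hk)) ?_ fun t ht => ?_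
  · obtain ⟨-, -, h0, h1, h2, h3⟩ := hT T le_rfl
    intro k hk
    interval_cases k <;> linarith
  · obtain ⟨-, hget, -, -, h2t, -⟩ := hT t ht
    nlinarith

end FourthOrder

theorem strictMonoOn_div_self {g : ℝ → ℝ} (hg : DifferentiableOn ℝ g (Ioi 0))
    (h : ∀ t > 0, g t / t < deriv g t) : StrictMonoOn (fun t => g t / t) (Ioi 0) := by
  have hderiv : ∀ t > 0, HasDerivAt (fun t => g t / t) ((deriv g t * t - g t * 1) / t ^ 2) t :=
    fun t ht => ((hg.differentiableAt (Ioi_mem_nhds ht)).hasDerivAt).div (hasDerivAt_id t) ht.ne'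
  refine strictMonoOn_of_deriv_pos (convex_Ioi 0)
    (fun t ht => (hderiv t ht).continuousAt.continuousWithinAt) fun t ht => ?_
  rw [interior_Ioi] at ht
  have ht : 0 < t := ht
  rw [(hderiv t ht).deriv]
  have := (div_lt_iff₀ ht).1 (h t ht)
  exact div_pos (by linarith) (by positivity)

theorem eventually_mul_le_mul_rpow {c q : ℝ} (hc : 0 < c) (hq : 1 < q) (B : ℝ) :
    ∀ᶠ x in atTop, B * x ≤ c * x ^ q := by
  filter_upwards [(tendsto_rpow_atTop (sub_pos.2 hq)).eventually_ge_atTop (B / c),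
    eventually_gt_atTop 0] with x hBx hx
  rw [← div_mul_cancel₀ (x ^ q) hx.ne', ← rpow_sub_one hx.ne', ← mul_assoc]
  exact mul_le_mul_of_nonneg_right ((div_le_iff₀' hc).1 hBx) hx.le

theorem stmt_8_general (n : ℕ) (hn : 5 ≤ n) (g : ℝ → ℝ) (hg : CondG n g)
    (A B : ℝ) (hA : A = ((n : ℝ) * ((n : ℝ) - 4) + 8) / 2)
    (a₀ : ℝ) (ha₀ : 0 < a₀) (hga₀ : g a₀ = B * a₀)
    (v : ℝ → ℝ) (hv4 : ContDiffOn ℝ 4 v (Set.Ioi 0)) (hvpos : ∀ t > 0, 0 < v t)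
    (hvsol : ∀ t > 0, iteratedDeriv 4 v t - A * iteratedDeriv 2 v t + B * v t = g (v t))
    (a : EReal) (hlim : Filter.Tendsto (fun t => (v t : EReal)) Filter.atTop (nhds a)) :
    a = 0 ∨ a = (a₀ : EReal) := by
  obtain ⟨hgC1, -, -, hgderiv, -, ⟨q, c, hq, hc, hgq⟩, -⟩ := hg
  have hu : ∀ k < 4, ∀ᶠ t in atTop,
      HasDerivAt (iteratedDeriv k v) (iteratedDeriv (k + 1) v t) t := fun k hk =>
    (eventually_gt_atTop 0).mono fun t ht =>
      hv4.hasDerivAt_iteratedDeriv isOpen_Ioi (by exact_mod_cast hk) ht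
  have hode : ∀ᶠ t in atTop,
      g (v t) - B * v t = iteratedDeriv 4 v t - A * iteratedDeriv 2 v t := by
    filter_upwards [eventually_gt_atTop 0] with t ht
    linarith [hvsol t ht]
  have ha : 0 ≤ a := ge_of_tendsto hlim <| by
    filter_upwards [eventually_gt_atTop 0] with t ht
    exact_mod_cast (hvpos t ht).le
  induction a using EReal.rec with
  | bot => simp at ha
  | coe ℓ =>
    have hvℓ : Tendsto v atTop (𝓝 ℓ) := EReal.tendsto_coe.1 hlim
    rcases (EReal.coe_nonneg.1 ha).eq_or_lt with hℓ | hℓ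
    · exact Or.inl (by rw [← hℓ]; rfl)
    have hgℓ : g ℓ - B * ℓ = 0 := eq_zero_of_tendsto_fourth_sub hu
      (by simpa using hvℓ) <| (((hgC1.continuousOn.continuousAt (Ioi_mem_nhds hℓ)).tendsto.comp
        hvℓ).sub (hvℓ.const_mul B)).congr' hode
    refine Or.inr (EReal.coe_eq_coe_iff.2 ((strictMonoOn_div_self
      (hgC1.differentiableOn one_ne_zero) fun t ht => (hgderiv t ht).1).injOn hℓ ha₀ ?_))
    rw [hga₀, sub_eq_zero.1 hgℓ, mul_div_cancel_right₀ _ hℓ.ne', mul_div_cancel_right₀ _ ha₀.ne']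
  | top =>
    have hvtop : Tendsto v atTop atTop := EReal.tendsto_coe_nhds_top_iff.1 hlim
    have hA0 : 0 < A := by
      have : (5 : ℝ) ≤ n := by exact_mod_cast hn
      rw [hA]; nlinarith
    refine (false_of_tendsto_atTop_of_rpow_le_fourth_sub hA0 hu (half_pos hc) hq
      (by simpa using hvtop) ?_).elim
    filter_upwards [hode, hvtop.eventually (eventually_mul_le_mul_rpow (half_pos hc) hq B),
      hvtop.eventually_ge_atTop 1] with t hodet hB h1
    rw [iteratedDeriv_zero, ← hodet]
    linarith [hgq (v t) h1]

theorem stmt_8 (n : ℕ) (hn : 5 ≤ n) (g : ℝ → ℝ) (hg : CondG n g)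
    (A B : ℝ) (hA : A = ((n : ℝ) * ((n : ℝ) - 4) + 8) / 2)
    (hB : B = (n : ℝ) ^ 2 * ((n : ℝ) - 4) ^ 2 / 16)
    (a₀ : ℝ) (ha₀ : 0 < a₀) (hga₀ : g a₀ = B * a₀)
    (v : ℝ → ℝ) (hv4 : ContDiffOn ℝ 4 v (Set.Ioi 0)) (hvpos : ∀ t > 0, 0 < v t)
    (hvsol : ∀ t > 0, iteratedDeriv 4 v t - A * iteratedDeriv 2 v t + B * v t = g (v t))
    (a : EReal) (hlim : Filter.Tendsto (fun t => (v t : EReal)) Filter.atTop (nhds a)) :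
    a = 0 ∨ a = (a₀ : EReal) :=
  stmt_8_general n hn g hg A B hA a₀ ha₀ hga₀ v hv4 hvpos hvsol a hlim

end
end
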